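/- arXiv:2504.18427 — 2 statements merged into one kernel-verified Lean document; each statement's English description precedes it below -/
import Mathlib

section
/- For every tree T with n ≥ 1 vertices, the pathwidth of T is at most log₂(n). -/
/-!
Every tree on `m` vertices has a centroid `c`: each component of `T - c` has at most `m / 2`
vertices. So a forest whose components all have fewer than `2 ^ k` vertices has a path
decomposition with bags of size `≤ k`: in each component `C` pick a centroid `c`, decompose
`C - c` recursively with bags of size `≤ k - 1`, add `c` to every bag, and concatenate the
decompositions of the components. Since `n < 2 ^ (log₂ n + 1)`, the width is at most `log₂ n`.
-/

open Finset

section Decomp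

variable {V : Type*} [Fintype V] [DecidableEq V]

/-- `X : Fin p → Finset V` is a path decomposition of `G`. -/
def IsPathDecomp (G : SimpleGraph V) (p : ℕ) (X : Fin p → Finset V) : Prop :=
  (∀ v : V, ∃ i, v ∈ X i) ∧
  (∀ u v : V, G.Adj u v → ∃ i, u ∈ X i ∧ v ∈ X i) ∧
  (∀ v : V, ∀ i j k : Fin p, i ≤ j → j ≤ k → v ∈ X i → v ∈ X k → v ∈ X j)

/-- The pathwidth of `G` : the least `w` such that `G` has a path decomposition
with all bags of size at most `w + 1`. -/
noncomputable def pathwidth (G : SimpleGraph V) : ℕ :=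
  sInf {w : ℕ | ∃ (p : ℕ) (X : Fin p → Finset V),
    IsPathDecomp G p X ∧ ∀ i, (X i).card ≤ w + 1}

/-- `(T, X)` is a tree decomposition of `G`. -/
def IsTreeDecomp {ι : Type*} (G : SimpleGraph V) (T : SimpleGraph ι) (X : ι → Finset V) : Prop :=
  T.IsTree ∧
  (∀ v : V, ∃ t, v ∈ X t) ∧
  (∀ u v : V, G.Adj u v → ∃ t, u ∈ X t ∧ v ∈ X t) ∧
  (∀ v : V, (T.induce {t | v ∈ X t}).Connected)

/-- The treewidth of `G`. -/
noncomputable def treewidth (G : SimpleGraph V) : ℕ :=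
  sInf {w : ℕ | ∃ (m : ℕ) (T : SimpleGraph (Fin m)) (X : Fin m → Finset V),
    IsTreeDecomp G T X ∧ ∀ t, (X t).card ≤ w + 1}

end Decomp

namespace SimpleGraph

variable {V : Type*} (G : SimpleGraph V)

/-- `G[A]` as a graph on all of `V`: the vertices outside `A` become isolated. -/
def restrict (A : Set V) : SimpleGraph V where
  Adj x y := x ∈ A ∧ y ∈ A ∧ G.Adj x y
  symm := ⟨fun _ _ h => ⟨h.2.1, h.1, h.2.2.symm⟩⟩
  loopless := ⟨fun _ h => h.2.2.ne rfl⟩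

variable {G}

lemma restrict_mono {A B : Set V} (h : A ⊆ B) : G.restrict A ≤ G.restrict B :=
  fun _ _ hxy => ⟨h hxy.1, h hxy.2.1, hxy.2.2⟩

lemma restrict_le_deleteEdges {A : Set V} {c : V} (hc : c ∉ A) (d : V) :
    G.restrict A ≤ G.deleteEdges {s(c, d)} := by
  rintro x y ⟨hx, hy, hxy⟩
  refine (deleteEdges_adj ..).2 ⟨hxy, fun h => ?_⟩
  rcases Sym2.eq_iff.1 (Set.mem_singleton_iff.1 h) with ⟨rfl, -⟩ | ⟨-, rfl⟩
  exacts [hc hx, hc hy]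

variable (G) in
open scoped Classical in
/-- The vertex set of the component of `u` in `G[A]`; empty when `u ∉ A`. -/
noncomputable def component (A : Finset V) (u : V) : Finset V :=
  {x ∈ A | (G.restrict A).Reachable u x}

section component

variable {A B : Finset V} {u v w x y : V}

@[simp]
lemma mem_component : x ∈ G.component A u ↔ x ∈ A ∧ (G.restrict A).Reachable u x := by
  simp [component]

lemma component_subset : G.component A u ⊆ A := fun _ hx => (mem_component.1 hx).1

lemma mem_component_self (hu : u ∈ A) : u ∈ G.component A u :=
  mem_component.2 ⟨hu, .rfl⟩

lemma component_eq_of_mem (hv : v ∈ G.component A u) : G.component A v = G.component A u := by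
  have huv := (mem_component.1 hv).2
  ext x
  simp only [mem_component]
  exact and_congr_right fun _ => ⟨huv.trans, huv.symm.trans⟩

lemma component_mono (h : A ⊆ B) : G.component A u ⊆ G.component B u := fun _ hx =>
  mem_component.2 ⟨h (mem_component.1 hx).1, (mem_component.1 hx).2.mono (restrict_mono h)⟩

lemma mem_component_of_adj (hx : x ∈ G.component A u) (hy : y ∈ A) (hxy : G.Adj x y) :
    y ∈ G.component A u := by
  obtain ⟨hxA, hux⟩ := mem_component.1 hx
  exact mem_component.2 ⟨hy, hux.trans (Adj.reachable ⟨hxA, hy, hxy⟩)⟩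

lemma reachable_restrict_component_of_reachable
    (h : (G.restrict A).Reachable u v) : (G.restrict (G.component A u)).Reachable u v := by
  rw [reachable_iff_reflTransGen] at h ⊢
  induction h with
  | refl => exact .refl
  | @tail y z huy hyz ih =>
    have hy : y ∈ G.component A u :=
      mem_component.2 ⟨hyz.1, (reachable_iff_reflTransGen ..).2 huy⟩
    exact ih.tail ⟨hy, mem_component_of_adj hy hyz.2.1 hyz.2.2, hyz.2.2⟩

lemma reachable_restrict_component (hx : x ∈ G.component A u) (hy : y ∈ G.component A u) :
    (G.restrict (G.component A u)).Reachable x y := by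
  rw [← component_eq_of_mem hx] at hy ⊢
  exact reachable_restrict_component_of_reachable (mem_component.1 hy).2

lemma component_subset_component (hwB : w ∈ B) (hBA : G.component B w ⊆ A)
    (hw : w ∈ G.component A v) : G.component B w ⊆ G.component A v := fun _ hx =>
  mem_component.2 ⟨hBA hx, (mem_component.1 hw).2.trans
    ((reachable_restrict_component (mem_component_self hwB) hx).mono (restrict_mono hBA))⟩

lemma exists_adj_reachable_restrict_erase [DecidableEq V] (h : (G.restrict A).Reachable u v)
    (hvu : v ≠ u) : ∃ w ∈ A, G.Adj u w ∧ (G.restrict (A.erase u)).Reachable w v := by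
  rw [reachable_iff_reflTransGen] at h
  induction h with
  | refl => exact absurd rfl hvu
  | @tail y z huy hyz ih =>
    rcases eq_or_ne y u with rfl | hyu
    · exact ⟨z, hyz.2.1, hyz.2.2, .rfl⟩
    · obtain ⟨w, hwA, huw, hwy⟩ := ih hyu
      have hyz' : (G.restrict (A.erase u)).Adj y z :=
        ⟨mem_erase.2 ⟨hyu, hyz.1⟩, mem_erase.2 ⟨hvu, hyz.2.1⟩, hyz.2.2⟩
      exact ⟨w, hwA, huw, hwy.trans hyz'.reachable⟩

/-- In a forest the edge `cd` is a bridge, so the two sides of it are disjoint. -/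
lemma disjoint_component_erase [DecidableEq V] (hG : G.IsAcyclic) {c d : V} (hcd : G.Adj c d) :
    Disjoint (G.component (A.erase c) d) (G.component (A.erase d) c) := by
  refine Finset.disjoint_left.2 fun x hxd hxc =>
    isBridge_iff.1 (isAcyclic_iff_forall_adj_isBridge.1 hG hcd) ?_
  have hdx := (mem_component.1 hxd).2.mono (restrict_le_deleteEdges (c := c) (by simp) d)
  have hcx := (mem_component.1 hxc).2.mono (restrict_le_deleteEdges (c := d) (by simp) c)
  rw [Sym2.eq_swap] at hcx
  exact hcx.trans hdx.symm

end component

/-! A vertex `c` minimising the largest component of `C - c` is a centroid: were some component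
`D` of `C - c` larger than `|C| / 2`, moving to the neighbour `d` of `c` in `D` would make every
component smaller than `|D|`. -/

section centroid

variable [DecidableEq V] (hG : G.IsAcyclic) {C : Finset V}
  (hC : ∀ x ∈ C, ∀ y ∈ C, (G.restrict C).Reachable x y)
include hG hC

lemma card_component_erase_lt {c d u : V} (hdC : d ∈ C) (hcd : G.Adj c d)
    (hbig : C.card < 2 * (G.component (C.erase c) d).card) (hu : u ∈ C.erase d) :
    (G.component (C.erase d) u).card < (G.component (C.erase c) d).card := by
  have hdD : d ∈ G.component (C.erase c) d := mem_component_self (mem_erase.2 ⟨hcd.ne', hdC⟩)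
  by_cases huE : u ∈ G.component (C.erase d) c
  · rw [component_eq_of_mem huE]
    have hsub : G.component (C.erase c) d ∪ G.component (C.erase d) c ⊆ C :=
      union_subset (component_subset.trans (erase_subset c C))
        (component_subset.trans (erase_subset d C))
    have := card_le_card hsub
    rw [card_union_of_disjoint (disjoint_component_erase hG hcd)] at this
    omega
  · obtain ⟨w, hwC, hdw, hwu⟩ :=
      exists_adj_reachable_restrict_erase (hC d hdC u (mem_of_mem_erase hu)) (ne_of_mem_erase hu)
    have hwd : w ∈ C.erase d := mem_erase.2 ⟨hdw.ne', hwC⟩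
    have hK : G.component (C.erase d) u = G.component (C.erase d) w :=
      component_eq_of_mem (mem_component.2 ⟨hu, hwu⟩)
    have hcK : c ∉ G.component (C.erase d) w := fun h => huE (by
      rw [component_eq_of_mem h, ← hK]; exact mem_component_self hu)
    have hKc : G.component (C.erase d) w ⊆ C.erase c := fun x hx =>
      mem_erase.2 ⟨fun hxc => hcK (hxc ▸ hx), mem_of_mem_erase (component_subset hx)⟩
    have hwD : w ∈ G.component (C.erase c) d :=
      mem_component_of_adj hdD (hKc (mem_component_self hwd)) hdw
    have hKD : G.component (C.erase d) u ⊆ (G.component (C.erase c) d).erase d := fun x hx =>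
      mem_erase.2 ⟨ne_of_mem_erase (component_subset hx),
        component_subset_component hwd hKc hwD (hK ▸ hx)⟩
    have := card_le_card hKD
    rw [card_erase_of_mem hdD] at this
    have := card_pos.2 ⟨d, hdD⟩
    omega

lemma exists_centroid (hCne : C.Nonempty) :
    ∃ c ∈ C, ∀ v ∈ C.erase c, 2 * (G.component (C.erase c) v).card ≤ C.card := by
  obtain ⟨c, hcC, hmin⟩ := C.exists_min_image
    (fun c => (C.erase c).sup fun v => (G.component (C.erase c) v).card) hCne
  refine ⟨c, hcC, fun v hv => not_lt.1 fun hbig => ?_⟩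
  obtain ⟨d, hdC, hcd, hdv⟩ :=
    exists_adj_reachable_restrict_erase (hC c hcC v (mem_of_mem_erase hv)) (ne_of_mem_erase hv)
  rw [component_eq_of_mem (mem_component.2 ⟨hv, hdv⟩)] at hbig
  have hlt : (C.erase d).sup (fun u => (G.component (C.erase d) u).card) <
      (G.component (C.erase c) d).card :=
    (Finset.sup_lt_iff (by rw [bot_eq_zero']; omega)).2 fun _ hu =>
      card_component_erase_lt hG hC hdC hcd hbig hu
  have hle : (G.component (C.erase c) d).card ≤
      (C.erase c).sup fun u => (G.component (C.erase c) u).card :=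
    le_sup (f := fun u => (G.component (C.erase c) u).card) (mem_erase.2 ⟨hcd.ne', hdC⟩)
  exact (hmin d hdC).not_gt (hlt.trans_le hle)

end centroid

end SimpleGraph

variable {V : Type*} {G : SimpleGraph V}

/-- A path decomposition of `G[A]` with bags `X 0, …, X (p - 1)`. The bags are indexed by `ℕ` so
that decompositions can be concatenated; those past `p` only matter through `ordConnected`. -/
structure IsPathDecompOn (G : SimpleGraph V) (A : Finset V) (p : ℕ) (X : ℕ → Finset V) :
    Prop where
  exists_mem : ∀ v ∈ A, ∃ i < p, v ∈ X i
  subset : ∀ i, X i ⊆ A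
  exists_mem_of_adj : ∀ u ∈ A, ∀ v ∈ A, G.Adj u v → ∃ i < p, u ∈ X i ∧ v ∈ X i
  ordConnected : ∀ v, Set.OrdConnected {i | v ∈ X i}

namespace IsPathDecompOn

variable {A B : Finset V} {p q : ℕ} {X Y : ℕ → Finset V}

lemma empty : IsPathDecompOn G ∅ 0 fun _ => ∅ where
  exists_mem := by simp
  subset := by simp
  exists_mem_of_adj := by simp
  ordConnected _ := by simpa using Set.ordConnected_empty

lemma insert [DecidableEq V] (h : IsPathDecompOn G A p X) (c : V) :
    IsPathDecompOn G (insert c A) (max p 1) fun i => insert c (X i) where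
  exists_mem v hv := by
    rcases mem_insert.1 hv with rfl | hv
    · exact ⟨0, by omega, mem_insert_self _ _⟩
    · obtain ⟨i, hi, hvi⟩ := h.exists_mem v hv
      exact ⟨i, by omega, mem_insert_of_mem hvi⟩
  subset i := insert_subset_insert c (h.subset i)
  exists_mem_of_adj u hu v hv huv := by
    rcases mem_insert.1 hu with rfl | huA
    · obtain ⟨i, hi, hvi⟩ := h.exists_mem v ((mem_insert.1 hv).resolve_left huv.ne')
      exact ⟨i, by omega, mem_insert_self _ _, mem_insert_of_mem hvi⟩
    rcases mem_insert.1 hv with rfl | hvA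
    · obtain ⟨i, hi, hui⟩ := h.exists_mem u huA
      exact ⟨i, by omega, mem_insert_of_mem hui, mem_insert_self _ _⟩
    · obtain ⟨i, hi, hui, hvi⟩ := h.exists_mem_of_adj u huA v hvA huv
      exact ⟨i, by omega, mem_insert_of_mem hui, mem_insert_of_mem hvi⟩
  ordConnected v := by
    by_cases hvc : v = c
    · simpa [hvc] using Set.ordConnected_univ
    · simpa [hvc] using h.ordConnected v

lemma append [DecidableEq V] (hX : IsPathDecompOn G A p X) (hY : IsPathDecompOn G B q Y)
    (hAB : Disjoint A B) (hadj : ∀ u ∈ A, ∀ v ∈ B, ¬ G.Adj u v) :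
    IsPathDecompOn G (A ∪ B) (p + q) fun i => if i < p then X i else Y (i - p) where
  exists_mem v hv := by
    rcases mem_union.1 hv with hv | hv
    · obtain ⟨i, hi, hvi⟩ := hX.exists_mem v hv
      exact ⟨i, by omega, by simpa [hi] using hvi⟩
    · obtain ⟨i, hi, hvi⟩ := hY.exists_mem v hv
      exact ⟨p + i, by omega, by simpa using hvi⟩
  subset i := by
    split_ifs
    exacts [(hX.subset i).trans subset_union_left, (hY.subset _).trans subset_union_right]
  exists_mem_of_adj u hu v hv huv := by
    rcases mem_union.1 hu with hu | hu <;> rcases mem_union.1 hv with hv | hv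
    · obtain ⟨i, hi, hui, hvi⟩ := hX.exists_mem_of_adj u hu v hv huv
      exact ⟨i, by omega, by simpa [hi] using hui, by simpa [hi] using hvi⟩
    · exact absurd huv (hadj u hu v hv)
    · exact absurd huv.symm (hadj v hv u hu)
    · obtain ⟨i, hi, hui, hvi⟩ := hY.exists_mem_of_adj u hu v hv huv
      exact ⟨p + i, by omega, by simpa using hui, by simpa using hvi⟩
  ordConnected v := by
    by_cases hvA : v ∈ A
    · have hvB : v ∉ B := disjoint_left.1 hAB hvA
      convert (hX.ordConnected v).inter (Set.ordConnected_Iio (a := p)) using 1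
      ext i
      simp only [Set.mem_ofPred_eq, Set.mem_inter_iff, Set.mem_Iio]
      split_ifs with hi
      · simp [hi]
      · exact iff_of_false (fun h => hvB (hY.subset _ h)) fun h => hi h.2
    · convert (Set.ordConnected_Ici (a := p)).inter
        ((hY.ordConnected v).preimage_mono fun _ _ h => Nat.sub_le_sub_right h p) using 1
      ext i
      simp only [Set.mem_ofPred_eq, Set.mem_inter_iff, Set.mem_Ici, Set.mem_preimage]
      split_ifs with hi
      · exact iff_of_false (fun h => hvA (hX.subset i h)) (by omega)
      · simp [le_of_not_gt hi]

lemma isPathDecomp [Fintype V] (h : IsPathDecompOn G univ p X) :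
    IsPathDecomp G p fun i => X i :=
  ⟨fun v => by
    obtain ⟨i, hi, hv⟩ := h.exists_mem v (mem_univ v)
    exact ⟨⟨i, hi⟩, hv⟩,
  fun u v huv => by
    obtain ⟨i, hi, hu, hv⟩ := h.exists_mem_of_adj u (mem_univ u) v (mem_univ v) huv
    exact ⟨⟨i, hi⟩, hu, hv⟩,
  fun v _ _ _ hij hjk hi hk => (h.ordConnected v).out hi hk ⟨hij, hjk⟩⟩

end IsPathDecompOn

namespace SimpleGraph.IsAcyclic

theorem exists_isPathDecompOn [DecidableEq V] (hG : G.IsAcyclic) (A : Finset V) (k : ℕ)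
    (hA : ∀ v ∈ A, (G.component A v).card < 2 ^ k) :
    ∃ p X, IsPathDecompOn G A p X ∧ ∀ i, (X i).card ≤ k := by
  induction A using Finset.strongInduction generalizing k with | H A ih =>
  rcases A.eq_empty_or_nonempty with rfl | ⟨v, hv⟩
  · exact ⟨0, _, .empty, fun _ => by simp⟩
  have hvC : v ∈ G.component A v := mem_component_self hv
  obtain ⟨c, hcC, hcent⟩ :=
    exists_centroid hG (fun _ hx _ hy => reachable_restrict_component hx hy) ⟨v, hvC⟩
  have hCA : G.component A v ⊆ A := component_subset
  have hCk := hA v hv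
  obtain ⟨k, rfl⟩ : ∃ k', k = k' + 1 := Nat.exists_eq_add_one_of_ne_zero (by
    rintro rfl
    have := card_pos.2 ⟨v, hvC⟩
    rw [pow_zero] at hCk
    omega)
  obtain ⟨p, X, hX, hXk⟩ := ih _ ((erase_ssubset hcC).trans_subset hCA) k fun u hu => by
    have := hcent u hu
    rw [pow_succ] at hCk
    omega
  obtain ⟨q, Y, hY, hYk⟩ := ih _ (sdiff_ssubset hCA ⟨v, hvC⟩) (k + 1) fun u hu =>
    (card_le_card (component_mono sdiff_subset)).trans_lt (hA u (mem_sdiff.1 hu).1)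
  have hXc := hX.insert c
  rw [insert_erase hcC] at hXc
  have hXY := hXc.append hY disjoint_sdiff fun u hu w hw huw =>
    (mem_sdiff.1 hw).2 (mem_component_of_adj hu (mem_sdiff.1 hw).1 huw)
  rw [union_sdiff_of_subset hCA] at hXY
  refine ⟨_, _, hXY, fun i => ?_⟩
  split_ifs
  · exact (card_insert_le _ _).trans (Nat.succ_le_succ (hXk i))
  · exact hYk _

end SimpleGraph.IsAcyclic

theorem statement_18_general (V : Type) [Fintype V] [DecidableEq V] (T : SimpleGraph V)
    (hT : T.IsTree) :
    (pathwidth T : ℝ) ≤ Real.logb 2 (Fintype.card V) := by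
  obtain ⟨p, X, hX, hXcard⟩ := hT.isAcyclic.exists_isPathDecompOn univ
    (Nat.log 2 (Fintype.card V) + 1)
    fun _ _ => (card_le_univ _).trans_lt (Nat.lt_pow_succ_log_self one_lt_two _)
  have hpw : pathwidth T ≤ Nat.log 2 (Fintype.card V) :=
    Nat.sInf_le ⟨p, fun i => X i, hX.isPathDecomp, fun i => hXcard i⟩
  calc (pathwidth T : ℝ) ≤ Nat.log 2 (Fintype.card V) := by exact_mod_cast hpw
    _ ≤ Real.logb 2 (Fintype.card V) := Real.natLog_le_logb _ _

/-- For every tree `T` on `n ≥ 1` vertices, the pathwidth of `T` is at most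
`log₂ n`. -/
theorem statement_18 (V : Type) [Fintype V] [DecidableEq V] (T : SimpleGraph V)
    (hT : T.IsTree) (hn : 1 ≤ Fintype.card V) :
    (pathwidth T : ℝ) ≤ Real.logb 2 (Fintype.card V) :=
  statement_18_general V T hT
end

section
/- For every integer k ≥ 0, the graph G_k has exactly 2^{k+2} − 2 vertices and has exactly two distinct maximum independent sets; each has size α(G_k) = 2^{k+1} − 1, and these two maximum independent sets partition V(G_k). -/
open Finset

section HardCoreDefs

variable {V : Type*} [Fintype V] [DecidableEq V]

/-- `I` is an independent set of the simple graph `G`. -/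
def IsIndep (G : SimpleGraph V) (I : Finset V) : Prop :=
  ∀ u ∈ I, ∀ v ∈ I, ¬ G.Adj u v

open Classical in
/-- The set `𝓘(G)` of independent sets of `G`. -/
noncomputable def indepSets (G : SimpleGraph V) : Finset (Finset V) :=
  Finset.univ.filter fun I => IsIndep G I

/-- The hard-core partition function `Z_G(λ)`. -/
noncomputable def Z (G : SimpleGraph V) (lam : ℝ) : ℝ :=
  ∑ I ∈ indepSets G, lam ^ I.card

/-- The hard-core distribution `π_{G,λ}`. -/
noncomputable def hardCore (G : SimpleGraph V) (lam : ℝ) (I : Finset V) : ℝ :=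
  lam ^ I.card / Z G lam

open Classical in
/-- The transition probabilities of the Glauber dynamics on independent sets of `G`
with fugacity `λ`. -/
noncomputable def glauberP (G : SimpleGraph V) (lam : ℝ) (I J : Finset V) : ℝ :=
  (1 / (Fintype.card V : ℝ)) * ∑ v : V,
    if v ∈ I then
      (if J = I.erase v then 1 / (lam + 1) else if J = I then lam / (lam + 1) else 0)
    else if IsIndep G (insert v I) then
      (if J = insert v I then lam / (lam + 1) else if J = I then 1 / (lam + 1) else 0)
    else (if J = I then 1 else 0)

/-- One step of the Glauber dynamics, applied to a distribution on independent sets. -/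
noncomputable def stepDist (G : SimpleGraph V) (lam : ℝ) (μ : Finset V → ℝ) :
    Finset V → ℝ :=
  fun J => ∑ I ∈ indepSets G, μ I * glauberP G lam I J

/-- The distribution of the Glauber dynamics after `t` steps started from `I`. -/
noncomputable def distAfter (G : SimpleGraph V) (lam : ℝ) (I : Finset V) (t : ℕ) :
    Finset V → ℝ :=
  (stepDist G lam)^[t] (fun J => if J = I then 1 else 0)

/-- Total variation distance between two distributions on independent sets. -/
noncomputable def tvDist (G : SimpleGraph V) (μ ν : Finset V → ℝ) : ℝ :=
  (1 / 2) * ∑ I ∈ indepSets G, |μ I - ν I|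

/-- The mixing time `τ_{G,λ}` of the Glauber dynamics. -/
noncomputable def mixingTime (G : SimpleGraph V) (lam : ℝ) : ℕ :=
  sInf {t : ℕ | ∀ I ∈ indepSets G,
    tvDist G (distAfter G lam I t) (hardCore G lam) ≤ 1 / 4}

/-- `λ̃ = e^{|ln λ|} = max (λ, 1/λ)`. -/
noncomputable def lamTilde (lam : ℝ) : ℝ := max lam lam⁻¹

/-- The independence number of the subgraph of `G` induced by `S`. -/
noncomputable def alphaOn (G : SimpleGraph V) (S : Finset V) : ℕ :=
  ((indepSets G).filter fun I => I ⊆ S).sup Finset.card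

/-- The number of independent sets of the subgraph of `G` induced by `S`. -/
noncomputable def numIndepOn (G : SimpleGraph V) (S : Finset V) : ℕ :=
  ((indepSets G).filter fun I => I ⊆ S).card

/-- The subgraph of `G` induced by a finite vertex set `S`. -/
def inducedF (G : SimpleGraph V) (S : Finset V) : SimpleGraph {x : V // x ∈ S} :=
  SimpleGraph.comap Subtype.val G

end HardCoreDefs

/-- The graph `G_k`, built from the complete binary tree of depth `k`. The nodes of the tree
are encoded by `Fin (2^(k+1) - 1)` in heap order: the node of index `i` represents the heap
label `i + 1`, so the parent of label `j ≥ 2` is `j / 2`. Each tree node `t` is replaced by a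
pair of adjacent vertices `u_t = (t, false)` and `v_t = (t, true)`, and every tree edge `t t'`
yields the matching edges `u_t u_{t'}` and `v_t v_{t'}`. -/
def Gk (k : ℕ) : SimpleGraph (Fin (2 ^ (k + 1) - 1) × Bool) where
  Adj x y :=
    (x.1 = y.1 ∧ x.2 ≠ y.2) ∨
    (x.2 = y.2 ∧ ((x.1 : ℕ) + 1 = ((y.1 : ℕ) + 1) / 2 ∨ (y.1 : ℕ) + 1 = ((x.1 : ℕ) + 1) / 2))
  symm := by
    constructor
    rintro x y (⟨h1, h2⟩ | ⟨h1, h2⟩)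
    · exact Or.inl ⟨h1.symm, h2.symm⟩
    · exact Or.inr ⟨h1.symm, h2.symm⟩
  loopless := by
    constructor
    rintro x (⟨-, h⟩ | ⟨-, h⟩)
    · exact h rfl
    · omega

/-!
An independent set of `G_k` meets each pair `X_t` at most once, so it has at most `|T_k|`
vertices, and one of that size picks exactly one vertex of every `X_t`, i.e. it is the graph of
a map `f : V(T_k) → Bool`. Independence says precisely that `f` is a proper 2-coloring of the
tree, and since the tree is connected `f` is determined by its value at the root: it is the
depth parity, or its negation. The two colorings give two complementary maximum independent
sets.
-/

lemma mem_indepSets {V : Type*} [Fintype V] [DecidableEq V] {G : SimpleGraph V}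
    {I : Finset V} : I ∈ indepSets G ↔ IsIndep G I := by
  simp [indepSets]

lemma alphaOn_univ_eq {V : Type*} [Fintype V] [DecidableEq V] {G : SimpleGraph V} {n : ℕ}
    (hle : ∀ I ∈ indepSets G, I.card ≤ n) {I : Finset V} (hI : I ∈ indepSets G)
    (hcard : I.card = n) : alphaOn G univ = n :=
  le_antisymm (Finset.sup_le fun J hJ => hle J (mem_filter.mp hJ).1)
    (hcard ▸ le_sup (mem_filter.mpr ⟨hI, subset_univ I⟩))

section GraphFinset

variable {α : Type*} [DecidableEq α]

lemma IsIndep.injOn_fst {G : SimpleGraph (α × Bool)} {I : Finset (α × Bool)}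
    (hG : ∀ a, G.Adj (a, false) (a, true)) (hI : IsIndep G I) :
    Set.InjOn Prod.fst (I : Set (α × Bool)) := by
  rintro ⟨a, b⟩ hx ⟨a', b'⟩ hy (rfl : a = a')
  by_contra hne
  cases b <;> cases b'
  all_goals first
    | exact hne rfl
    | exact hI _ hx _ hy (hG a)
    | exact hI _ hx _ hy (hG a).symm

variable [Fintype α]

def graphFinset (f : α → Bool) : Finset (α × Bool) :=
  univ.image fun a => (a, f a)

lemma mem_graphFinset {f : α → Bool} {x : α × Bool} : x ∈ graphFinset f ↔ x.2 = f x.1 := by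
  simp only [graphFinset, mem_image, mem_univ, true_and]
  exact ⟨by rintro ⟨a, rfl⟩; rfl, fun h => ⟨x.1, Prod.ext rfl h.symm⟩⟩

lemma card_graphFinset (f : α → Bool) : (graphFinset f).card = Fintype.card α :=
  card_image_of_injective _ fun _ _ h => congrArg Prod.fst h

lemma graphFinset_injective : Function.Injective (graphFinset (α := α)) := by
  intro f g h
  funext a
  exact mem_graphFinset.mp (h ▸ mem_graphFinset.mpr rfl : (a, f a) ∈ graphFinset g)

variable {f g : α → Bool}

lemma disjoint_graphFinset (h : ∀ a, f a ≠ g a) : Disjoint (graphFinset f) (graphFinset g) :=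
  disjoint_left.mpr fun x hf hg =>
    h x.1 ((mem_graphFinset.mp hf).symm.trans (mem_graphFinset.mp hg))

lemma graphFinset_union_eq_univ (h : ∀ a, f a ≠ g a) :
    graphFinset f ∪ graphFinset g = univ := by
  refine eq_univ_of_forall fun x => ?_
  simp only [mem_union, mem_graphFinset]
  have := h x.1
  revert this
  cases x.2 <;> cases f x.1 <;> cases g x.1 <;> decide

variable {G : SimpleGraph (α × Bool)} {I : Finset (α × Bool)}

lemma IsIndep.card_le (hG : ∀ a, G.Adj (a, false) (a, true)) (hI : IsIndep G I) :
    I.card ≤ Fintype.card α := by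
  rw [← card_image_of_injOn (hI.injOn_fst hG)]
  exact card_le_univ _

lemma IsIndep.exists_eq_graphFinset (hG : ∀ a, G.Adj (a, false) (a, true)) (hI : IsIndep G I)
    (hcard : I.card = Fintype.card α) : ∃ f : α → Bool, I = graphFinset f := by
  have himage : I.image Prod.fst = univ :=
    eq_univ_of_card _ (by rw [card_image_of_injOn (hI.injOn_fst hG), hcard])
  have hfiber : ∀ a, ∃ b, (a, b) ∈ I := fun a => by
    obtain ⟨x, hx, rfl⟩ := mem_image.mp (himage ▸ mem_univ a : a ∈ I.image Prod.fst)
    exact ⟨x.2, hx⟩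
  choose f hf using hfiber
  have hsub : graphFinset f ⊆ I := fun x hx => by
    rw [mem_graphFinset] at hx
    rw [← Prod.mk.eta (p := x), hx]
    exact hf x.1
  exact ⟨f, (eq_of_subset_of_card_le hsub (by rw [hcard, card_graphFinset])).symm⟩

end GraphFinset

section HeapTree

/-- The root has heap label `1`, so `Nat.log 2 j` is the depth of the node with label `j`. -/
def depthParity (j : ℕ) : Bool := Nat.bodd (Nat.log 2 j)

lemma depthParity_one : depthParity 1 = false := by
  simp [depthParity]

lemma depthParity_div_two {j : ℕ} (h : 2 ≤ j) : depthParity (j / 2) = !depthParity j := by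
  obtain ⟨m, hm⟩ := Nat.exists_eq_succ_of_ne_zero (Nat.log_pos (b := 2) (by norm_num) h).ne'
  rw [depthParity, depthParity, Nat.log_div_base, hm, Nat.succ_sub_one, Nat.bodd_succ,
    Bool.not_not]

/-- Node `i : Fin n` of the heap-ordered tree has label `i + 1`; label `j` has parent `j / 2`. -/
def IsHeapColoring {n : ℕ} (f : Fin n → Bool) : Prop :=
  ∀ i j : Fin n, (i : ℕ) + 1 = ((j : ℕ) + 1) / 2 → f i ≠ f j

def heapColoring {n : ℕ} (b : Bool) (i : Fin n) : Bool := xor b (depthParity ((i : ℕ) + 1))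

lemma isHeapColoring_heapColoring {n : ℕ} (b : Bool) :
    IsHeapColoring (heapColoring (n := n) b) := by
  intro i j hij
  simp only [heapColoring, hij, depthParity_div_two (by omega : 2 ≤ (j : ℕ) + 1)]
  cases b <;> cases depthParity ((j : ℕ) + 1) <;> decide

lemma IsHeapColoring.eq_heapColoring {n : ℕ} {f : Fin n → Bool} (hf : IsHeapColoring f)
    (hn : 0 < n) : f = heapColoring (f ⟨0, hn⟩) := by
  funext ⟨m, hm⟩
  induction m using Nat.strong_induction_on with
  | _ m ih =>
    rcases Nat.eq_zero_or_pos m with rfl | hpos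
    · simp [heapColoring, depthParity_one]
    · have hparent : (m + 1) / 2 - 1 < m := by omega
      have hne := hf ⟨(m + 1) / 2 - 1, by omega⟩ ⟨m, hm⟩ (by simp only; omega)
      rw [ih _ hparent (by omega)] at hne
      simp only [heapColoring, Nat.sub_add_cancel (by omega : 1 ≤ (m + 1) / 2),
        depthParity_div_two (by omega : 2 ≤ m + 1)] at hne ⊢
      revert hne
      cases f ⟨0, by omega⟩ <;> cases f ⟨m, hm⟩ <;> cases depthParity (m + 1) <;> decide

end HeapTree

lemma Gk_adj_fiber (k : ℕ) (i : Fin (2 ^ (k + 1) - 1)) : (Gk k).Adj (i, false) (i, true) :=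
  Or.inl ⟨rfl, Bool.false_ne_true⟩

lemma isIndep_Gk_graphFinset_iff {k : ℕ} {f : Fin (2 ^ (k + 1) - 1) → Bool} :
    IsIndep (Gk k) (graphFinset f) ↔ IsHeapColoring f := by
  constructor
  · intro hI i j hij heq
    exact hI (i, f i) (mem_graphFinset.mpr rfl) (j, f j) (mem_graphFinset.mpr rfl)
      (Or.inr ⟨heq, Or.inl hij⟩)
  · rintro hf ⟨i, b⟩ hx ⟨j, c⟩ hy hadj
    rw [mem_graphFinset] at hx hy
    rcases hadj with ⟨hij, hbc⟩ | ⟨hbc, hij | hji⟩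
    · exact hbc (by rw [hx, hy, hij])
    · exact hf i j hij (by rw [← hx, ← hy, hbc])
    · exact hf j i hji (by rw [← hx, ← hy, hbc])

/-- For every `k ≥ 0`, the graph `G_k` has exactly `2^(k+2) - 2` vertices
and exactly two distinct maximum independent sets; each has size `α(G_k) = 2^(k+1) - 1`, and
the two maximum independent sets partition `V(G_k)`. -/
theorem statement_19 (k : ℕ) :
    Fintype.card (Fin (2 ^ (k + 1) - 1) × Bool) = 2 ^ (k + 2) - 2 ∧
    alphaOn (Gk k) Finset.univ = 2 ^ (k + 1) - 1 ∧
    ∃ I J : Finset (Fin (2 ^ (k + 1) - 1) × Bool),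
      I ∈ indepSets (Gk k) ∧ J ∈ indepSets (Gk k) ∧ I ≠ J ∧
      I.card = 2 ^ (k + 1) - 1 ∧ J.card = 2 ^ (k + 1) - 1 ∧
      Disjoint I J ∧ I ∪ J = Finset.univ ∧
      ∀ K ∈ indepSets (Gk k), K.card = 2 ^ (k + 1) - 1 → K = I ∨ K = J := by
  have hroot : 0 < 2 ^ (k + 1) - 1 := by have := Nat.one_lt_two_pow (Nat.succ_ne_zero k); omega
  have hindep (b : Bool) : graphFinset (heapColoring b) ∈ indepSets (Gk k) :=
    mem_indepSets.mpr (isIndep_Gk_graphFinset_iff.mpr (isHeapColoring_heapColoring b))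
  have hcard (b : Bool) : (graphFinset (heapColoring (n := 2 ^ (k + 1) - 1) b)).card =
      2 ^ (k + 1) - 1 := by rw [card_graphFinset, Fintype.card_fin]
  have hle : ∀ K ∈ indepSets (Gk k), K.card ≤ 2 ^ (k + 1) - 1 := fun K hK =>
    ((mem_indepSets.mp hK).card_le (Gk_adj_fiber k)).trans_eq (Fintype.card_fin _)
  have hcomplement (i : Fin (2 ^ (k + 1) - 1)) : heapColoring false i ≠ heapColoring true i := by
    simp [heapColoring]
  refine ⟨by simp [pow_succ]; omega, alphaOn_univ_eq hle (hindep false) (hcard false), _, _,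
    hindep false, hindep true,
    fun h => hcomplement ⟨0, hroot⟩ (congrFun (graphFinset_injective h) _),
    hcard false, hcard true, disjoint_graphFinset hcomplement,
    graphFinset_union_eq_univ hcomplement, fun K hK hKcard => ?_⟩
  obtain ⟨f, rfl⟩ := (mem_indepSets.mp hK).exists_eq_graphFinset (Gk_adj_fiber k)
    (hKcard.trans (Fintype.card_fin _).symm)
  have hf := isIndep_Gk_graphFinset_iff.mp (mem_indepSets.mp hK)
  rw [hf.eq_heapColoring hroot]
  cases f ⟨0, hroot⟩ <;> simp
end
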